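/- arXiv:1810.05035 — 2 statements merged into one kernel-verified Lean document; each statement's English description precedes it below -/
import Mathlib

section
/- For every ordinal α, the following are equivalent: (1) there exists a countably complete tail-uniform ultrafilter on α; (2) the cofinality cf(α) is a Fréchet cardinal, i.e., there exists a countably complete Fréchet uniform ultrafilter on cf(α). -/
/-!
Tail uniformity of an ultrafilter on a linear order says exactly that it refines `atTop`, and
pushing forward along a map that tends to `atTop` preserves both this and countable completeness.
A fundamental sequence `cf α → α` and a choice of "index above ξ" `α → cf α` are two such maps,
so `α` carries a countably complete tail-uniform ultrafilter iff `cf α` does. On the regular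
cardinal `cf α`, refining `atTop` is the same as Fréchet uniformity: initial segments are small,
and every member of an ultrafilter refining `atTop` is cofinal, hence of size at least `cf α`.
-/

/-- An ultrafilter is countably complete if every countable family of sets in it
has its intersection in it. -/
def CountablyComplete {X : Type*} (U : Ultrafilter X) : Prop :=
  ∀ s : Set (Set X), s.Countable → (∀ t ∈ s, t ∈ U) → ⋂₀ s ∈ U

/-- An ultrafilter on a set `X` is Fréchet uniform if every set in it has full cardinality. -/
def FrechetUniform {X : Type*} (U : Ultrafilter X) : Prop :=
  ∀ A ∈ U, Cardinal.mk A = Cardinal.mk X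

/-- A cardinal is Fréchet if it carries a countably complete Fréchet uniform ultrafilter. -/
def IsFrechet (l : Cardinal) : Prop :=
  ∃ U : Ultrafilter l.out, CountablyComplete U ∧ FrechetUniform U

/-- An ultrafilter on the ordinal `α` is tail uniform if every final segment of `α`
belongs to it. -/
def TailUniform {α : Ordinal} (U : Ultrafilter ↥(Set.Iio α)) : Prop :=
  ∀ β < α, {ξ : ↥(Set.Iio α) | β ≤ ξ.1} ∈ U

open Filter Set Cardinal Ordinal

section Transfer

variable {X Y : Type*}

theorem CountablyComplete.map {U : Ultrafilter X} (hU : CountablyComplete U) (g : X → Y) :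
    CountablyComplete (U.map g) := by
  intro s hs hmem
  rw [Ultrafilter.mem_map, preimage_sInter, ← sInter_image]
  refine hU _ (hs.image _) ?_
  rintro t ⟨u, hu, rfl⟩
  exact Ultrafilter.mem_map.1 (hmem u hu)

theorem FrechetUniform.map_equiv {U : Ultrafilter X} (hU : FrechetUniform U) (e : X ≃ Y) :
    FrechetUniform (U.map e) := by
  intro A hA
  have hXY : lift.{_, _} #X = lift #Y := lift_mk_eq'.2 ⟨e⟩
  rw [← hU _ (Ultrafilter.mem_map.1 hA), mk_preimage_equiv_lift] at hXY
  exact lift_inj.1 hXY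

theorem exists_countablyComplete_frechetUniform_congr (e : X ≃ Y) :
    (∃ U : Ultrafilter X, CountablyComplete U ∧ FrechetUniform U) ↔
      ∃ U : Ultrafilter Y, CountablyComplete U ∧ FrechetUniform U :=
  ⟨fun ⟨U, hcc, hfu⟩ => ⟨U.map e, hcc.map e, hfu.map_equiv e⟩,
    fun ⟨U, hcc, hfu⟩ => ⟨U.map e.symm, hcc.map e.symm, hfu.map_equiv e.symm⟩⟩

theorem exists_countablyComplete_le_atTop_of_tendsto [Preorder X] [Preorder Y] {g : X → Y}
    (hg : Tendsto g atTop atTop) :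
    (∃ U : Ultrafilter X, CountablyComplete U ∧ ↑U ≤ (atTop : Filter X)) →
      ∃ U : Ultrafilter Y, CountablyComplete U ∧ ↑U ≤ (atTop : Filter Y) :=
  fun ⟨U, hcc, hU⟩ => ⟨U.map g, hcc.map g, (map_mono hU).trans hg⟩

end Transfer

section AtTop

variable {X : Type*} {U : Ultrafilter X}

theorem Ultrafilter.isCofinal_of_le_atTop [Preorder X] (hU : ↑U ≤ (atTop : Filter X)) {A : Set X}
    (hA : A ∈ U) : IsCofinal A := fun x =>
  U.nonempty_of_mem (inter_mem hA (hU (mem_atTop x)))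

theorem frechetUniform_of_le_atTop [Preorder X] (hU : ↑U ≤ (atTop : Filter X))
    (hX : #X ≤ Order.cof X) : FrechetUniform U := fun _ hA =>
  (mk_set_le _).antisymm (hX.trans (Order.cof_le (U.isCofinal_of_le_atTop hU hA)))

theorem FrechetUniform.le_atTop [LinearOrder X] (hU : FrechetUniform U)
    (hX : ∀ x : X, #(Iio x) < #X) : ↑U ≤ (atTop : Filter X) := by
  refine le_iInf fun x => le_principal_iff.2 ?_
  by_contra hx
  rw [Ultrafilter.mem_coe, ← Ultrafilter.compl_mem_iff_notMem, compl_Ici] at hx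
  exact (hX x).ne (hU _ hx)

end AtTop

theorem frechetUniform_iff_le_atTop_of_cof_ord_eq {c : Cardinal} (hc : c.ord.cof = c)
    (U : Ultrafilter c.ord.ToType) : FrechetUniform U ↔ ↑U ≤ (atTop : Filter c.ord.ToType) := by
  have hmk : #c.ord.ToType = c := by rw [mk_toType, card_ord]
  refine ⟨fun hU => hU.le_atTop fun x => ?_, fun hU => frechetUniform_of_le_atTop hU ?_⟩
  · exact mk_Iio_lt x (by rw [hmk, type_toType])
  · rw [hmk, cof_toType, hc]

theorem tailUniform_iff_le_atTop {α : Ordinal} (U : Ultrafilter (Iio α)) :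
    TailUniform U ↔ ↑U ≤ (atTop : Filter (Iio α)) := by
  simp only [TailUniform, atTop, le_iInf_iff, le_principal_iff, Subtype.forall]
  rfl

theorem tendsto_atTop_of_le_comp_strictMono {A B : Type*} [Preorder A] [LinearOrder B]
    {f : B → A} (hf : StrictMono f) {g : A → B} (hg : ∀ x, x ≤ f (g x)) :
    Tendsto g atTop atTop :=
  tendsto_atTop.2 fun b =>
    mem_of_superset (mem_atTop (f b)) fun _ hx => hf.le_iff_le.1 (le_trans hx (hg _))

/-- An ordinal carries a countably complete tail-uniform ultrafilter if and only if
its cofinality is a Fréchet cardinal. -/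
theorem statement0 (α : Ordinal) :
    (∃ U : Ultrafilter ↥(Set.Iio α), CountablyComplete U ∧ TailUniform U) ↔
      IsFrechet α.cof := by
  obtain ⟨f, hf⟩ := exists_isFundamentalSeq (o := α) rfl
  set F : α.cof.ord.ToType → Iio α := f ∘ ToType.mk.symm
  have hF : StrictMono F := hf.strictMono.comp ToType.mk.symm.strictMono
  have hF_cofinal : ∀ ξ, ∃ i, ξ ≤ F i := fun ξ => by
    obtain ⟨_, ⟨i, rfl⟩, hi⟩ := hf.isCofinal_range ξ
    exact ⟨ToType.mk i, by simpa [F] using hi⟩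
  choose G hG using hF_cofinal
  obtain ⟨e⟩ : Nonempty (α.cof.out ≃ α.cof.ord.ToType) := Cardinal.eq.1 (by simp)
  simp only [tailUniform_iff_le_atTop, IsFrechet, exists_countablyComplete_frechetUniform_congr e,
    frechetUniform_iff_le_atTop_of_cof_ord_eq (cof_ord_cof α)]
  exact ⟨exists_countablyComplete_le_atTop_of_tendsto (tendsto_atTop_of_le_comp_strictMono hF hG),
    exists_countablyComplete_le_atTop_of_tendsto
      (tendsto_atTop_atTop_of_monotone hF.monotone fun ξ => ⟨G ξ, hG ξ⟩)⟩
end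

section
/- Suppose δ is a regular cardinal and U is an ultrafilter on a set X that is λ-indecomposable for every cardinal λ with δ ≤ λ ≤ 2^δ. Then there exists a partition P of X with |P| < δ that is maximal among partitions of size at most 2^δ: for every partition Q of X with |Q| ≤ 2^δ that refines P, there exists A ∈ U such that P↾A = Q↾A. -/
universe u

/-- A partition `Q` refines a partition `P` if every piece of `Q` is contained in a
piece of `P`. -/
def Refines {X : Type*} (Q P : Set (Set X)) : Prop :=
  ∀ s ∈ Q, ∃ t ∈ P, s ⊆ t

/-- The restriction of a partition `P` of `X` to a subset `A ⊆ X`: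
`P↾A = {A ∩ S : S ∈ P, A ∩ S ≠ ∅}`. -/
def restrictPart {X : Type*} (P : Set (Set X)) (A : Set X) : Set (Set X) :=
  {s | ∃ S ∈ P, s = A ∩ S ∧ s ≠ ∅}

/-- An ultrafilter `U` on `X` is `λ`-indecomposable if every partition of `X` into at
most `λ` pieces restricts to fewer than `λ` pieces on some set in `U`. -/
def Indecomposable {X : Type u} (U : Ultrafilter X) (l : Cardinal.{u}) : Prop :=
  ∀ P : Set (Set X), Setoid.IsPartition P → Cardinal.mk P ≤ l →
    ∃ A ∈ U, Cardinal.mk (restrictPart P A) < l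

/-!
If no partition with fewer than `δ` pieces were maximal, we could build a chain of partitions
`(P_α)_{α ≤ δ}`, each of size at most `2^δ`, each refining the earlier ones and differing from
each of them on every set of `U`. Indecomposability in `[δ, 2^δ]`, applied repeatedly, shrinks
any partition of size at most `2^δ` to fewer than `δ` pieces on some set of `U`; so modulo `U`
every `P_α` is a small partition, and non-maximality of that small partition provides
`P_{α+1}`. Limit stages take common refinements, of size at most `(2^δ)^δ = 2^δ`. Finally, on
a set `A ∈ U` where `P_δ` has fewer than `δ` pieces, every step `α → α+1` separates a pair of
pieces of `P_δ↾A` that `P_α` keeps together, so `δ ≤ |P_δ↾A|²`, which is absurd. For finite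
`δ` the trivial partition is maximal, since one piece of a finite partition lies in `U`.
-/

open Cardinal Set

variable {X : Type u}

theorem Refines.refl (P : Set (Set X)) : Refines P P := fun s hs => ⟨s, hs, subset_rfl⟩

theorem Refines.trans {P Q R : Set (Set X)} (hPQ : Refines P Q) (hQR : Refines Q R) :
    Refines P R := by
  intro s hs
  obtain ⟨t, ht, hst⟩ := hPQ s hs
  obtain ⟨r, hr, htr⟩ := hQR t ht
  exact ⟨r, hr, hst.trans htr⟩

theorem Setoid.IsPartition.eq_of_mem {P : Set (Set X)} (hP : Setoid.IsPartition P)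
    {s t : Set X} (hs : s ∈ P) (ht : t ∈ P) {x : X} (hxs : x ∈ s) (hxt : x ∈ t) : s = t :=
  (hP.2 x).unique ⟨hs, hxs⟩ ⟨ht, hxt⟩

theorem Setoid.IsPartition.subset_of_refines {P Q : Set (Set X)} (hP : Setoid.IsPartition P)
    (hQP : Refines Q P) {q p : Set X} (hq : q ∈ Q) (hp : p ∈ P) {x : X} (hxq : x ∈ q)
    (hxp : x ∈ p) : q ⊆ p := by
  obtain ⟨p', hp', hqp'⟩ := hQP q hq
  rwa [hP.eq_of_mem hp' hp (hqp' hxq) hxp] at hqp'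

theorem isPartition_singleton_univ [Nonempty X] :
    Setoid.IsPartition ({Set.univ} : Set (Set X)) :=
  ⟨fun h => empty_ne_univ (mem_singleton_iff.1 h),
    fun _ => ⟨Set.univ, ⟨rfl, trivial⟩, fun _ h => h.1⟩⟩

section Restrict

variable {P Q : Set (Set X)} {A B : Set X}

theorem inter_inter_of_subset (h : B ⊆ A) (S : Set X) : B ∩ (A ∩ S) = B ∩ S := by
  rw [← inter_assoc, inter_eq_self_of_subset_left h]

theorem Refines.restrictPart (h : Refines Q P) (A : Set X) :
    Refines (restrictPart Q A) (restrictPart P A) := by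
  rintro s ⟨S, hS, rfl, hne⟩
  obtain ⟨T, hT, hST⟩ := h S hS
  have hsub : A ∩ S ⊆ A ∩ T := inter_subset_inter_right A hST
  exact ⟨A ∩ T, ⟨T, hT, rfl, fun he => hne (subset_empty_iff.1 (he ▸ hsub))⟩, hsub⟩

theorem restrictPart_restrictPart (h : B ⊆ A) :
    restrictPart (restrictPart P A) B = restrictPart P B := by
  ext s
  constructor
  · rintro ⟨-, ⟨S, hS, rfl, -⟩, rfl, hne⟩
    exact ⟨S, hS, inter_inter_of_subset h S, inter_inter_of_subset h S ▸ hne⟩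
  · rintro ⟨S, hS, rfl, hne⟩
    refine ⟨A ∩ S, ⟨S, hS, rfl, fun he => hne ?_⟩, (inter_inter_of_subset h S).symm, hne⟩
    rw [← inter_inter_of_subset h S, he, inter_empty]

theorem mk_restrictPart_le (P : Set (Set X)) (A : Set X) : #(restrictPart P A) ≤ #P := by
  have hsub : restrictPart P A ⊆ (A ∩ ·) '' P := by
    rintro s ⟨S, hS, rfl, -⟩
    exact ⟨S, hS, rfl⟩
  exact (mk_le_mk_of_subset hsub).trans mk_image_le

theorem mk_restrictPart_mono (P : Set (Set X)) (h : B ⊆ A) :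
    #(restrictPart P B) ≤ #(restrictPart P A) := by
  rw [← restrictPart_restrictPart h]
  exact mk_restrictPart_le _ _

theorem Setoid.IsPartition.restrictPart_eq_singleton (hP : Setoid.IsPartition P) {p : Set X}
    (hp : p ∈ P) (hA : A ⊆ p) (hAne : A.Nonempty) : restrictPart P A = {A} := by
  ext s
  constructor
  · rintro ⟨S, hS, rfl, hne⟩
    obtain ⟨x, hxA, hxS⟩ := nonempty_iff_ne_empty.2 hne
    rw [hP.eq_of_mem hS hp hxS (hA hxA), inter_eq_self_of_subset_left hA]
    rfl
  · rintro rfl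
    exact ⟨p, hp, (inter_eq_self_of_subset_left hA).symm, hAne.ne_empty⟩

end Restrict

def IsPartitionOn (A : Set X) (P : Set (Set X)) : Prop :=
  ∅ ∉ P ∧ (∀ s ∈ P, s ⊆ A) ∧ ∀ a ∈ A, ∃! s, s ∈ P ∧ a ∈ s

namespace IsPartitionOn

variable {A : Set X} {P Q : Set (Set X)}

theorem eq_of_mem (hP : IsPartitionOn A P) {s t : Set X} (hs : s ∈ P) (ht : t ∈ P) {a : X}
    (has : a ∈ s) (hat : a ∈ t) : s = t :=
  (hP.2.2 a (hP.2.1 s hs has)).unique ⟨hs, has⟩ ⟨ht, hat⟩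

theorem nonempty (hP : IsPartitionOn A P) {s : Set X} (hs : s ∈ P) : s.Nonempty :=
  nonempty_iff_ne_empty.2 fun he => hP.1 (he ▸ hs)

theorem mem_of_refines_of_refines (hQ : IsPartitionOn A Q) (hQP : Refines Q P)
    (hPQ : Refines P Q) {s : Set X} (hs : s ∈ Q) : s ∈ P := by
  obtain ⟨t, ht, hst⟩ := hQP s hs
  obtain ⟨s', hs', hts'⟩ := hPQ t ht
  obtain ⟨a, ha⟩ := hQ.nonempty hs
  have hss' : s = s' := hQ.eq_of_mem hs hs' ha (hts' (hst ha))
  rwa [subset_antisymm hst (hss' ▸ hts')]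

theorem antisymm (hP : IsPartitionOn A P) (hQ : IsPartitionOn A Q) (hPQ : Refines P Q)
    (hQP : Refines Q P) : P = Q :=
  Subset.antisymm (fun _ => hP.mem_of_refines_of_refines hPQ hQP)
    (fun _ => hQ.mem_of_refines_of_refines hQP hPQ)

theorem exists_split (hP : IsPartitionOn A P) (hQ : IsPartitionOn A Q) (hQP : Refines Q P)
    (hne : Q ≠ P) :
    ∃ x ∈ A, ∃ y ∈ A, (∃ t ∈ P, x ∈ t ∧ y ∈ t) ∧ ∀ s ∈ Q, ¬(x ∈ s ∧ y ∈ s) := by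
  have hPQ : ¬Refines P Q := fun h => hne (hQ.antisymm hP hQP h)
  obtain ⟨t, ht, htQ⟩ : ∃ t ∈ P, ∀ q ∈ Q, ¬t ⊆ q := by simpa [Refines] using hPQ
  obtain ⟨x, hx⟩ := hP.nonempty ht
  have hxA : x ∈ A := hP.2.1 t ht hx
  obtain ⟨q, ⟨hq, hxq⟩, -⟩ := hQ.2.2 x hxA
  obtain ⟨p, hp, hqp⟩ := hQP q hq
  have hqt : q ⊆ t := hP.eq_of_mem hp ht (hqp hxq) hx ▸ hqp
  obtain ⟨y, hyt, hyq⟩ := not_subset.1 (htQ q hq)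
  refine ⟨x, hxA, y, hP.2.1 t ht hyt, ⟨t, ht, hx, hyt⟩, ?_⟩
  rintro s hs ⟨hxs, hys⟩
  exact hyq (hQ.eq_of_mem hs hq hxs hxq ▸ hys)

end IsPartitionOn

theorem Setoid.IsPartition.isPartitionOn_restrictPart {P : Set (Set X)}
    (hP : Setoid.IsPartition P) (A : Set X) : IsPartitionOn A (restrictPart P A) := by
  refine ⟨fun ⟨_, _, _, hne⟩ => hne rfl, ?_, fun a ha => ?_⟩
  · rintro s ⟨S, -, rfl, -⟩
    exact inter_subset_left
  · obtain ⟨S, ⟨hS, haS⟩, hSu⟩ := hP.2 a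
    refine ⟨A ∩ S, ⟨⟨S, hS, rfl, nonempty_iff_ne_empty.1 ⟨a, ha, haS⟩⟩, ha, haS⟩, ?_⟩
    rintro t ⟨⟨T, hT, rfl, -⟩, hat⟩
    rw [hSu T ⟨hT, hat.2⟩]

def extendPart (P : Set (Set X)) (A : Set X) : Set (Set X) :=
  restrictPart P A ∪ ({Aᶜ} \ {∅})

section Extend

variable {P : Set (Set X)} {A : Set X}

theorem Setoid.IsPartition.extendPart (hP : Setoid.IsPartition P) (A : Set X) :
    Setoid.IsPartition (extendPart P A) := by
  refine ⟨fun h => h.elim (fun ⟨_, _, _, hne⟩ => hne rfl) (fun h => h.2 rfl), fun a => ?_⟩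
  by_cases ha : a ∈ A
  · obtain ⟨S, ⟨hS, haS⟩, hSu⟩ := hP.2 a
    refine ⟨A ∩ S, ⟨Or.inl ⟨S, hS, rfl, nonempty_iff_ne_empty.1 ⟨a, ha, haS⟩⟩, ha, haS⟩, ?_⟩
    rintro s ⟨⟨T, hT, rfl, -⟩ | ⟨rfl, -⟩, hmem⟩
    · rw [hSu T ⟨hT, hmem.2⟩]
    · exact absurd ha hmem
  · refine ⟨Aᶜ, ⟨Or.inr ⟨rfl, nonempty_iff_ne_empty.1 ⟨a, ha⟩⟩, ha⟩, ?_⟩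
    rintro s ⟨⟨T, hT, rfl, -⟩ | ⟨rfl, -⟩, hmem⟩
    · exact absurd hmem.1 ha
    · rfl

theorem mk_extendPart_le (P : Set (Set X)) (A : Set X) :
    #(extendPart P A) ≤ #(restrictPart P A) + 1 := by
  refine (mk_union_le _ _).trans (add_le_add_right ?_ _)
  exact (mk_le_mk_of_subset sdiff_subset).trans (mk_singleton _).le

theorem restrictPart_extendPart {D : Set X} (h : D ⊆ A) :
    restrictPart (extendPart P A) D = restrictPart P D := by
  rw [extendPart]
  ext s
  constructor
  · rintro ⟨t, ⟨S, hS, rfl, -⟩ | ⟨rfl, -⟩, rfl, hne⟩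
    · exact ⟨S, hS, inter_inter_of_subset h S, inter_inter_of_subset h S ▸ hne⟩
    · exact absurd (disjoint_compl_right.mono_left h).inter_eq hne
  · intro hs
    rw [← restrictPart_restrictPart h] at hs
    obtain ⟨t, ht, rfl, hne⟩ := hs
    exact ⟨t, Or.inl ht, rfl, hne⟩

end Extend

def commonRefinement (ℱ : Set (Set (Set X))) : Set (Set X) :=
  {s | s ≠ ∅ ∧ ∃ c : ℱ → Set X, (∀ P : ℱ, c P ∈ (P : Set (Set X))) ∧ s = ⋂ P, c P}

section CommonRefinement

variable {ℱ : Set (Set (Set X))}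

theorem isPartition_commonRefinement (hℱ : ∀ P ∈ ℱ, Setoid.IsPartition P) :
    Setoid.IsPartition (commonRefinement ℱ) := by
  refine ⟨fun ⟨hne, _⟩ => hne rfl, fun a => ?_⟩
  choose c hc hu using fun P : ℱ => (hℱ P P.2).2 a
  obtain ⟨hc, hac⟩ := forall_and.1 hc
  refine ⟨⋂ P, c P, ⟨⟨nonempty_iff_ne_empty.1 ⟨a, mem_iInter.2 hac⟩, c, hc, rfl⟩,
    mem_iInter.2 hac⟩, ?_⟩
  rintro s ⟨⟨-, d, hd, rfl⟩, has⟩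
  have hdc : d = c := funext fun P => hu P (d P) ⟨hd P, mem_iInter.1 has P⟩
  rw [hdc]

theorem commonRefinement_refines {P : Set (Set X)} (hP : P ∈ ℱ) :
    Refines (commonRefinement ℱ) P := by
  rintro s ⟨-, c, hc, rfl⟩
  exact ⟨c ⟨P, hP⟩, hc ⟨P, hP⟩, iInter_subset c ⟨P, hP⟩⟩

theorem mk_commonRefinement_le {κ : Cardinal.{u}} (hℱ : ∀ P ∈ ℱ, #P ≤ κ) :
    #(commonRefinement ℱ) ≤ κ ^ #ℱ := by
  have hsub : commonRefinement ℱ ⊆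
      range fun c : ∀ P : ℱ, (P : Set (Set X)) => ⋂ P, (c P : Set X) := by
    rintro s ⟨-, c, hc, rfl⟩
    exact ⟨fun P => ⟨c P, hc P⟩, rfl⟩
  calc #(commonRefinement ℱ) ≤ #(∀ P : ℱ, (P : Set (Set X))) :=
        (mk_le_mk_of_subset hsub).trans mk_range_le
    _ ≤ Cardinal.prod fun _ : ℱ => κ := by
        rw [mk_pi]
        exact prod_le_prod _ _ fun P => hℱ P P.2
    _ = κ ^ #ℱ := by rw [prod_const, lift_id, lift_id]

end CommonRefinement

def InSamePiece (P : Set (Set X)) (s t : Set X) : Prop :=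
  ∃ p ∈ P, s ⊆ p ∧ t ⊆ p

theorem InSamePiece.mono {P Q : Set (Set X)} {s t : Set X} (h : InSamePiece Q s t)
    (hQP : Refines Q P) : InSamePiece P s t := by
  obtain ⟨q, hq, hsq, htq⟩ := h
  obtain ⟨p, hp, hqp⟩ := hQP q hq
  exact ⟨p, hp, hsq.trans hqp, htq.trans hqp⟩

theorem exists_inSamePiece_not_inSamePiece {P Q R : Set (Set X)} {A : Set X}
    (hP : Setoid.IsPartition P) (hQ : Setoid.IsPartition Q) (hR : Setoid.IsPartition R)
    (hRQ : Refines R Q) (hQP : Refines Q P) (hne : restrictPart Q A ≠ restrictPart P A) :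
    ∃ r ∈ restrictPart R A, ∃ r' ∈ restrictPart R A,
      InSamePiece P r r' ∧ ¬InSamePiece Q r r' := by
  obtain ⟨x, hx, y, hy, ⟨-, ⟨p, hp, rfl, -⟩, hxp, hyp⟩, hsplit⟩ :=
    (hP.isPartitionOn_restrictPart A).exists_split (hQ.isPartitionOn_restrictPart A)
      (hQP.restrictPart A) hne
  obtain ⟨rx, ⟨hrx, hxrx⟩, -⟩ := hR.2 x
  obtain ⟨ry, ⟨hry, hyry⟩, -⟩ := hR.2 y
  have hRP := hRQ.trans hQP
  refine ⟨A ∩ rx, ⟨rx, hrx, rfl, nonempty_iff_ne_empty.1 ⟨x, hx, hxrx⟩⟩,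
    A ∩ ry, ⟨ry, hry, rfl, nonempty_iff_ne_empty.1 ⟨y, hy, hyry⟩⟩,
    ⟨p, hp, inter_subset_right.trans (hP.subset_of_refines hRP hrx hp hxrx hxp.2),
      inter_subset_right.trans (hP.subset_of_refines hRP hry hp hyry hyp.2)⟩, ?_⟩
  rintro ⟨q, hq, hxq, hyq⟩
  have hxq : x ∈ q := hxq ⟨hx, hxrx⟩
  exact hsplit (A ∩ q) ⟨q, hq, rfl, nonempty_iff_ne_empty.1 ⟨x, hx, hxq⟩⟩
    ⟨⟨hx, hxq⟩, hy, hyq ⟨hy, hyry⟩⟩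

theorem card_le_mk_prod_restrictPart {F : Ordinal.{u} → Set (Set X)} {θ : Ordinal.{u}}
    {A : Set X} (hF : ∀ o ≤ θ, Setoid.IsPartition (F o))
    (hrefines : ∀ o' o, o' ≤ o → o ≤ θ → Refines (F o) (F o'))
    (hne : ∀ o < θ, restrictPart (F (Order.succ o)) A ≠ restrictPart (F o) A) :
    θ.card ≤ #(restrictPart (F θ) A × restrictPart (F θ) A) := by
  set T := restrictPart (F θ) A
  have hsplit : ∀ o : Iio θ, ∃ x : T × T,
      InSamePiece (F o) x.1 x.2 ∧ ¬InSamePiece (F (Order.succ o)) x.1 x.2 := by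
    rintro ⟨o, ho⟩
    have hs : Order.succ o ≤ θ := Order.succ_le_of_lt ho
    obtain ⟨r, hr, r', hr', hsame, hnot⟩ := exists_inSamePiece_not_inSamePiece (hF o ho.le)
      (hF _ hs) (hF θ le_rfl) (hrefines _ _ hs le_rfl) (hrefines _ _ (Order.le_succ o) hs)
      (hne o ho)
    exact ⟨(⟨r, hr⟩, ⟨r', hr'⟩), hsame, hnot⟩
  choose g hg using hsplit
  have hinj : Function.Injective g := Function.Injective.of_lt_imp_ne fun i j hij heq =>
    (hg i).2 (heq ▸ (hg j).1.mono (hrefines _ _ (Order.succ_le_of_lt hij) j.2.le))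
  have := lift_mk_le_lift_mk_of_injective hinj
  rwa [mk_Iio_ordinal, lift_lift, lift_le] at this

def IsMaximalPartition (U : Ultrafilter X) (κ : Cardinal.{u}) (P : Set (Set X)) : Prop :=
  ∀ Q : Set (Set X), Setoid.IsPartition Q → #Q ≤ κ → Refines Q P →
    ∃ A ∈ U, restrictPart P A = restrictPart Q A

def Splits (U : Ultrafilter X) (R P : Set (Set X)) : Prop :=
  ∀ P₀ : Set (Set X), Refines R P₀ → ∀ C ∈ U, restrictPart P C ≠ restrictPart P₀ C

section Ultrafilter

variable {U : Ultrafilter X} {δ κ : Cardinal.{u}}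

theorem not_indecomposable_one : ¬Indecomposable U 1 := by
  intro hU
  have : Nonempty X := Filter.nonempty_of_neBot (U : Filter X)
  obtain ⟨A, hA, hlt⟩ := hU _ isPartition_singleton_univ (mk_singleton _).le
  rw [isPartition_singleton_univ.restrictPart_eq_singleton rfl (subset_univ A)
    (U.nonempty_of_mem hA), mk_singleton] at hlt
  exact hlt.false

theorem isMaximalPartition_singleton_univ (hκ : κ < ℵ₀) :
    IsMaximalPartition U κ {Set.univ} := by
  intro Q hQ hQκ _
  have hfin : Q.Finite := lt_aleph0_iff_set_finite.1 (hQκ.trans_lt hκ)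
  obtain ⟨S, hSQ, hSU⟩ := (Ultrafilter.finite_sUnion_mem_iff hfin).1
    (hQ.sUnion_eq_univ ▸ Filter.univ_mem)
  have hS : S.Nonempty := U.nonempty_of_mem hSU
  have : Nonempty X := ⟨hS.some⟩
  exact ⟨S, hSU, by rw [isPartition_singleton_univ.restrictPart_eq_singleton rfl
    (subset_univ S) hS, hQ.restrictPart_eq_singleton hSQ subset_rfl hS]⟩

theorem exists_mem_mk_restrictPart_lt (hδ : ℵ₀ ≤ δ)
    (hind : ∀ l, δ ≤ l → l ≤ κ → Indecomposable U l) {Q : Set (Set X)}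
    (hQ : Setoid.IsPartition Q) (hQκ : #Q ≤ κ) : ∃ A ∈ U, #(restrictPart Q A) < δ := by
  induction h : #Q using WellFoundedLT.induction generalizing Q with
  | _ l IH =>
  subst h
  rcases lt_or_ge #Q δ with hQδ | hδQ
  · exact ⟨Set.univ, Filter.univ_mem, (mk_restrictPart_le Q _).trans_lt hQδ⟩
  obtain ⟨A, hA, hAQ⟩ := hind #Q hδQ hQκ Q hQ le_rfl
  rcases lt_or_ge #(restrictPart Q A) δ with hAδ | hδA
  · exact ⟨A, hA, hAδ⟩
  have hext : #(extendPart Q A) < #Q :=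
    ((mk_extendPart_le Q A).trans_eq (add_one_eq (hδ.trans hδA))).trans_lt hAQ
  obtain ⟨B, hB, hBδ⟩ := IH _ hext (hQ.extendPart A) (hext.le.trans hQκ) rfl
  refine ⟨A ∩ B, Filter.inter_mem hA hB, ?_⟩
  calc #(restrictPart Q (A ∩ B)) = #(restrictPart (extendPart Q A) (A ∩ B)) := by
        rw [restrictPart_extendPart inter_subset_left]
    _ ≤ #(restrictPart (extendPart Q A) B) := mk_restrictPart_mono _ inter_subset_right
    _ < δ := hBδ

end Ultrafilter

theorem exists_refines_splits {U : Ultrafilter X} {δ κ : Cardinal.{u}} (hδ : ℵ₀ ≤ δ)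
    (hκ : ℵ₀ ≤ κ)
    (hsmall : ∀ R : Set (Set X), Setoid.IsPartition R → #R ≤ κ →
      ∃ B ∈ U, #(restrictPart R B) < δ)
    (hmax : ∀ S : Set (Set X), Setoid.IsPartition S → #S < δ → ¬IsMaximalPartition U κ S)
    {R : Set (Set X)} (hR : Setoid.IsPartition R) (hRκ : #R ≤ κ) :
    ∃ P : Set (Set X), Setoid.IsPartition P ∧ #P ≤ κ ∧ Refines P R ∧ Splits U R P := by
  obtain ⟨B, hB, hRB⟩ := hsmall R hR hRκ
  have hS := hR.extendPart B
  have hSδ : #(extendPart R B) < δ :=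
    (mk_extendPart_le R B).trans_lt (add_lt_of_lt hδ hRB (one_lt_aleph0.trans_le hδ))
  obtain ⟨Q, hQ, hQκ, hQS, hQne⟩ : ∃ Q : Set (Set X), Setoid.IsPartition Q ∧ #Q ≤ κ ∧
      Refines Q (extendPart R B) ∧ ∀ A ∈ U, restrictPart (extendPart R B) A ≠ restrictPart Q A := by
    simpa [IsMaximalPartition] using hmax _ hS hSδ
  have hpair : ∀ P ∈ ({R, Q} : Set (Set (Set X))), Setoid.IsPartition P ∧ #P ≤ κ := by
    rintro P (rfl | rfl)
    exacts [⟨hR, hRκ⟩, ⟨hQ, hQκ⟩]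
  refine ⟨commonRefinement {R, Q}, isPartition_commonRefinement fun P hP => (hpair P hP).1,
    (mk_commonRefinement_le fun P hP => (hpair P hP).2).trans_eq (pow_eq hκ ?_ ?_),
    commonRefinement_refines (mem_insert R {Q}), ?_⟩
  · exact Cardinal.one_le_iff_ne_zero.2 (mk_ne_zero_iff.2 ⟨⟨R, mem_insert R {Q}⟩⟩)
  · exact lt_aleph0_iff_set_finite.2 (toFinite _)
  intro P₀ hRP₀ C hC heq
  -- on `D = C ∩ B`, the partitions `Q`, `extendPart R B = R`, `P₀ = P` refine each other cyclically
  set D := C ∩ B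
  have hD : D ⊆ C := inter_subset_left
  have hPP₀ : restrictPart (commonRefinement {R, Q}) D = restrictPart P₀ D := by
    rw [← restrictPart_restrictPart hD, heq, restrictPart_restrictPart hD]
  have hSQ : Refines (restrictPart (extendPart R B) D) (restrictPart Q D) := by
    rw [restrictPart_extendPart inter_subset_right]
    refine (hRP₀.restrictPart D).trans ?_
    rw [← hPP₀]
    exact (commonRefinement_refines (by simp)).restrictPart D
  exact hQne D (Filter.inter_mem hC hB) ((hS.isPartitionOn_restrictPart D).antisymm
    (hQ.isPartitionOn_restrictPart D) hSQ (hQS.restrictPart D))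

theorem commonRefinement_image_Iio {F : Ordinal.{u} → Set (Set X)} {κ : Cardinal.{u}}
    {o : Ordinal.{u}} (hF : ∀ o' < o, Setoid.IsPartition (F o') ∧ #(F o') ≤ κ) (hκ : κ ≠ 0)
    (ho : κ ^ o.card ≤ κ) :
    Setoid.IsPartition (commonRefinement (F '' Iio o)) ∧
      #(commonRefinement (F '' Iio o)) ≤ κ := by
  refine ⟨isPartition_commonRefinement ?_, (mk_commonRefinement_le (κ := κ) ?_).trans ?_⟩
  · rintro _ ⟨o', ho', rfl⟩
    exact (hF o' ho').1
  · rintro _ ⟨o', ho', rfl⟩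
    exact (hF o' ho').2
  · have himage : #(F '' Iio o) ≤ o.card := by
      have := mk_image_le_lift (f := F) (s := Iio o)
      rwa [mk_Iio_ordinal, lift_lift, lift_le] at this
    exact (power_le_power_left hκ himage).trans ho

def IsSplittingStep (U : Ultrafilter X) (κ : Cardinal.{u}) (f : Set (Set X) → Set (Set X)) :
    Prop :=
  ∀ R : Set (Set X), Setoid.IsPartition R → #R ≤ κ →
    Setoid.IsPartition (f R) ∧ #(f R) ≤ κ ∧ Refines (f R) R ∧ Splits U R (f R)

section RefinementChain

noncomputable def refinementChain (f : Set (Set X) → Set (Set X)) : Ordinal.{u} → Set (Set X) :=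
  Ordinal.lt_wf.fix fun o rec => f (commonRefinement (range fun i : Iio o => rec i i.2))

theorem refinementChain_eq (f : Set (Set X) → Set (Set X)) (o : Ordinal.{u}) :
    refinementChain f o = f (commonRefinement (refinementChain f '' Iio o)) := by
  rw [refinementChain, WellFounded.fix_eq, image_eq_range]

variable {f : Set (Set X) → Set (Set X)} {U : Ultrafilter X} {κ : Cardinal.{u}}
  {θ o : Ordinal.{u}}

theorem refinementChain_spec
    (hf : IsSplittingStep U κ f)
    (hκ : κ ≠ 0) (hθ : κ ^ θ.card ≤ κ) (ho : o ≤ θ) :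
    Setoid.IsPartition (refinementChain f o) ∧ #(refinementChain f o) ≤ κ ∧
      Refines (refinementChain f o) (commonRefinement (refinementChain f '' Iio o)) ∧
      Splits U (commonRefinement (refinementChain f '' Iio o)) (refinementChain f o) := by
  induction o using WellFoundedLT.induction with
  | _ o IH =>
  have hR := commonRefinement_image_Iio
    (fun o' ho' => ⟨(IH o' ho' (ho'.le.trans ho)).1, (IH o' ho' (ho'.le.trans ho)).2.1⟩) hκ
    ((power_le_power_left hκ (Ordinal.card_le_card ho)).trans hθ)
  rw [refinementChain_eq]
  exact hf _ hR.1 hR.2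

theorem refinementChain_refines
    (hf : IsSplittingStep U κ f)
    (hκ : κ ≠ 0) (hθ : κ ^ θ.card ≤ κ) {o' : Ordinal.{u}} (h : o' ≤ o) (ho : o ≤ θ) :
    Refines (refinementChain f o) (refinementChain f o') := by
  rcases h.eq_or_lt with rfl | h
  · exact Refines.refl _
  · exact (refinementChain_spec hf hκ hθ ho).2.2.1.trans
      (commonRefinement_refines (mem_image_of_mem _ h))

theorem refinementChain_succ_restrictPart_ne
    (hf : IsSplittingStep U κ f)
    (hκ : κ ≠ 0) (hθ : κ ^ θ.card ≤ κ) (ho : Order.succ o ≤ θ) {C : Set X} (hC : C ∈ U) :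
    restrictPart (refinementChain f (Order.succ o)) C ≠ restrictPart (refinementChain f o) C :=
  (refinementChain_spec hf hκ hθ ho).2.2.2 _
    (commonRefinement_refines (mem_image_of_mem _ (Order.lt_succ o))) C hC

end RefinementChain

theorem statement5_general {X : Type u} (δ : Cardinal.{u})
    (U : Ultrafilter X)
    (hind : ∀ l : Cardinal.{u}, δ ≤ l → l ≤ 2 ^ δ → Indecomposable U l) :
    ∃ P : Set (Set X), Setoid.IsPartition P ∧ Cardinal.mk P < δ ∧
      ∀ Q : Set (Set X), Setoid.IsPartition Q → Cardinal.mk Q ≤ 2 ^ δ →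
        Refines Q P → ∃ A ∈ U, restrictPart P A = restrictPart Q A := by
  suffices ∃ P, Setoid.IsPartition P ∧ #P < δ ∧ IsMaximalPartition U (2 ^ δ) P from this
  have hκ0 : (2 : Cardinal.{u}) ^ δ ≠ 0 := power_ne_zero δ two_ne_zero
  rcases lt_or_ge δ ℵ₀ with hfin | hδ
  · have : Nonempty X := Filter.nonempty_of_neBot (U : Filter X)
    rcases le_or_gt δ 1 with hδ1 | hδ1
    · exact (not_indecomposable_one (hind 1 hδ1 (Cardinal.one_le_iff_ne_zero.2 hκ0))).elim
    · exact ⟨{Set.univ}, isPartition_singleton_univ, (mk_singleton _).trans_lt hδ1,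
        isMaximalPartition_singleton_univ (power_lt_aleph0 ofNat_lt_aleph0 hfin)⟩
  by_contra! hmax
  have hsmall : ∀ R : Set (Set X), Setoid.IsPartition R → #R ≤ 2 ^ δ →
      ∃ B ∈ U, #(restrictPart R B) < δ := fun R hR => exists_mem_mk_restrictPart_lt hδ hind hR
  obtain ⟨f, hf⟩ : ∃ f, IsSplittingStep U (2 ^ δ) f := by
    choose! f hf using fun R (hR : Setoid.IsPartition R) (hRκ : #R ≤ 2 ^ δ) =>
      exists_refines_splits hδ (hδ.trans (cantor δ).le) hsmall hmax hR hRκ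
    exact ⟨f, hf⟩
  have hθ : ((2 : Cardinal.{u}) ^ δ) ^ δ.ord.card ≤ 2 ^ δ := by
    rw [card_ord, ← power_mul, mul_eq_self hδ]
  have htop := refinementChain_spec hf hκ0 hθ le_rfl
  obtain ⟨A, hA, hAδ⟩ := hsmall _ htop.1 htop.2.1
  have hlen := card_le_mk_prod_restrictPart (A := A)
    (fun o ho => (refinementChain_spec hf hκ0 hθ ho).1)
    (fun o' o h ho => refinementChain_refines hf hκ0 hθ h ho)
    (fun o ho => refinementChain_succ_restrictPart_ne hf hκ0 hθ (Order.succ_le_of_lt ho) hA)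
  simp only [card_ord, mk_prod, lift_id] at hlen
  exact hlen.not_gt (mul_lt_of_lt hδ hAδ hAδ)

/-- Silver's lemma: if `δ` is regular and `U` is `λ`-indecomposable for every cardinal
`λ ∈ [δ, 2^δ]`, then there is a partition of `X` of size `< δ` that is maximal among
partitions of size at most `2^δ`. -/
theorem statement5 {X : Type u} (δ : Cardinal.{u}) (hreg : δ.ord.cof = δ)
    (U : Ultrafilter X)
    (hind : ∀ l : Cardinal.{u}, δ ≤ l → l ≤ 2 ^ δ → Indecomposable U l) :
    ∃ P : Set (Set X), Setoid.IsPartition P ∧ Cardinal.mk P < δ ∧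
      ∀ Q : Set (Set X), Setoid.IsPartition Q → Cardinal.mk Q ≤ 2 ^ δ →
        Refines Q P → ∃ A ∈ U, restrictPart P A = restrictPart Q A :=
  statement5_general δ U hind
end
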